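/- arXiv:2208.02913 — 3 statements merged into one kernel-verified Lean document; each statement's English description precedes it below -/
import Mathlib

section
/- Let U be a finite multiset of unit vectors in R^n, let 1 ≤ k ≤ n, and let 0 ≤ ρ ≤ 1. Then at least one of the following holds: (A) the number of k-tuples (u_1,...,u_k) ∈ U^k with |u_1 ∧ ... ∧ u_k| ≥ ρ^{k-1} is at least (1/2)(#U)^k; or (B) there is a (k-1)-dimensional linear subspace H ⊂ R^n such that #{u ∈ U : |H ∧ u| ≤ ρ} ≥ 2^{-2k}(#U). -/
/-!
The volume `|u_1 ∧ ⋯ ∧ u_k|` is the product of the norms of the Gram–Schmidt vectors of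
`u_1, …, u_k`, and the `i`-th of these is the distance from `u_i` to the span of `u_1, …, u_{i-1}`.
If (A) fails, more than half of all `k`-tuples have volume `< ρ^(k-1)`; as the first factor is
`‖u_1‖ = 1`, each of them has an index `i ≥ 2` for which `u_i` is `ρ`-close to the span of the
earlier entries. Averaging over `i` and over the `i`-th entry with the other entries fixed yields
`i` and a tuple for which more than `#U / (2(k-1)) ≥ 4^(-k) #U` choices of the `i`-th entry are
`ρ`-close to one fixed subspace of dimension at most `k - 1`. Any `(k-1)`-dimensional subspace `H`
containing it witnesses (B).
-/

open Finset
open scoped Classical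

/-- The unsigned `k`-dimensional volume of the parallelepiped spanned by
`w 0, …, w (k-1)` in `ℝⁿ`: the square root of the Gram determinant. -/
noncomputable def gramVol {n k : ℕ} (w : Fin k → EuclideanSpace ℝ (Fin n)) : ℝ :=
  Real.sqrt (Matrix.det (Matrix.of fun i j : Fin k => (inner ℝ (w i) (w j) : ℝ)))

open InnerProductSpace Submodule Matrix
open scoped RealInnerProductSpace

section GramSchmidt

variable {E : Type*} [NormedAddCommGroup E] [InnerProductSpace ℝ E]

theorem Matrix.gram_sum_smul {ι κ : Type*} [Fintype ι] (g : ι → E) (c : Matrix ι κ ℝ) :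
    Matrix.gram ℝ (fun j => ∑ i, c i j • g i) = cᵀ * Matrix.gram ℝ g * c := by
  ext a b
  simp only [Matrix.gram_apply, sum_inner, inner_sum, real_inner_smul_left,
    real_inner_smul_right, Matrix.mul_apply, Matrix.transpose_apply, Finset.sum_mul]
  refine Finset.sum_congr rfl fun i _ => Finset.sum_congr rfl fun j _ => ?_
  ring

variable {ι : Type*} [LinearOrder ι] [LocallyFiniteOrderBot ι] [WellFoundedLT ι]

theorem gram_gramSchmidt [DecidableEq ι] (w : ι → E) :
    Matrix.gram ℝ (gramSchmidt ℝ w) = Matrix.diagonal fun i => ‖gramSchmidt ℝ w i‖ ^ 2 := by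
  ext i j
  rcases eq_or_ne i j with rfl | hij
  · simp [Matrix.gram_apply]
  · simp [Matrix.gram_apply, gramSchmidt_orthogonal ℝ w hij, hij]

theorem exists_det_eq_one_and_eq_sum_smul_gramSchmidt [Fintype ι] [DecidableEq ι] (w : ι → E) :
    ∃ c : Matrix ι ι ℝ, c.det = 1 ∧ w = fun j => ∑ i, c i j • gramSchmidt ℝ w i := by
  set g := gramSchmidt ℝ w
  let c : Matrix ι ι ℝ := .of fun i j =>
    if i < j then ⟪g i, w j⟫ / ‖g i‖ ^ 2 else if i = j then 1 else 0
  refine ⟨c, ?_, funext fun j => ?_⟩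
  · rw [Matrix.det_of_isUpperTriangular fun i j (hji : j < i) => by
      simp [c, hji.not_gt, hji.ne']]
    exact Finset.prod_eq_one fun i _ => by simp [c]
  · have hsupp : ∑ i, c i j • g i = ∑ i ∈ insert j (Iio j), c i j • g i := by
      refine (sum_subset (subset_univ _) fun i _ hi => ?_).symm
      simp only [mem_insert, mem_Iio, not_or, not_lt] at hi
      simp [c, hi.1, hi.2.not_gt]
    rw [hsupp, sum_insert (by simp)]
    conv_lhs => rw [gramSchmidt_def'' ℝ w j]
    congr 1
    · simp [c, g]
    · exact sum_congr rfl fun i hi => by simp [c, g, mem_Iio.mp hi]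

theorem det_gram_eq_prod_norm_gramSchmidt_sq [Fintype ι] [DecidableEq ι] (w : ι → E) :
    (Matrix.gram ℝ w).det = ∏ i, ‖gramSchmidt ℝ w i‖ ^ 2 := by
  obtain ⟨c, hc, hw⟩ := exists_det_eq_one_and_eq_sum_smul_gramSchmidt w
  conv_lhs => rw [hw]
  rw [Matrix.gram_sum_smul, gram_gramSchmidt, det_mul, det_mul, det_transpose, hc, det_diagonal,
    one_mul, mul_one]

theorem sub_gramSchmidt_mem_span (w : ι → E) (i : ι) :
    w i - gramSchmidt ℝ w i ∈ span ℝ (w '' Set.Iio i) := by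
  rw [sub_eq_iff_eq_add'.mpr (gramSchmidt_def' ℝ w i), ← span_gramSchmidt_Iio ℝ w i]
  refine sum_mem fun l hl => ?_
  rw [starProjection_singleton]
  exact smul_mem _ _ (subset_span ⟨l, mem_Iio.mp hl, rfl⟩)

theorem norm_gramSchmidt_le_norm_sub (w : ι → E) (i : ι) {q : E}
    (hq : q ∈ span ℝ (w '' Set.Iio i)) : ‖gramSchmidt ℝ w i‖ ≤ ‖w i - q‖ := by
  set g := gramSchmidt ℝ w i
  have hr : w i - g - q ∈ span ℝ (gramSchmidt ℝ w '' Set.Iio i) := by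
    rw [span_gramSchmidt_Iio]
    exact sub_mem (sub_gramSchmidt_mem_span w i) hq
  have horth : ⟪g, w i - g - q⟫ = 0 := by
    refine span_induction (p := fun x _ => ⟪g, x⟫ = 0) ?_ (inner_zero_right _)
      (fun x y _ _ hx hy => by rw [inner_add_right, hx, hy, add_zero])
      (fun a x _ hx => by rw [real_inner_smul_right, hx, mul_zero]) hr
    rintro _ ⟨l, hl, rfl⟩
    exact gramSchmidt_orthogonal ℝ w (ne_of_gt hl)
  have hsq : ‖w i - q‖ ^ 2 = ‖g‖ ^ 2 + ‖w i - g - q‖ ^ 2 := by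
    rw [show w i - q = g + (w i - g - q) by abel, norm_add_sq_real, horth]
    ring
  nlinarith [norm_nonneg g, norm_nonneg (w i - q), sq_nonneg ‖w i - g - q‖]

end GramSchmidt

theorem exists_orthonormal_span_le {E : Type*} [NormedAddCommGroup E] [InnerProductSpace ℝ E]
    [FiniteDimensional ℝ E] {d : ℕ} (hd : d ≤ Module.finrank ℝ E) (w : Fin d → E) :
    ∃ v : Fin d → E, Orthonormal ℝ v ∧ span ℝ (Set.range w) ≤ span ℝ (Set.range v) := by
  set m := Module.finrank ℝ E - d
  have hcard : Module.finrank ℝ E = Fintype.card (Fin (d + m)) := by simp [m]; omega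
  let w' : Fin (d + m) → E := Fin.append w 0
  let b := gramSchmidtOrthonormalBasis hcard w'
  refine ⟨b ∘ Fin.castAdd m, b.orthonormal.comp _ (Fin.castAdd_injective d m), ?_⟩
  rw [span_le]
  rintro _ ⟨j, rfl⟩
  have hwj : w j ∈ span ℝ (gramSchmidtNormed ℝ w' '' Set.Iic (Fin.castAdd m j)) := by
    rw [span_gramSchmidtNormed, show w j = w' (Fin.castAdd m j) by simp [w']]
    exact mem_span_gramSchmidt ℝ w' le_rfl
  refine span_le.mpr ?_ hwj
  rintro _ ⟨l, hl, rfl⟩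
  by_cases hzero : gramSchmidtNormed ℝ w' l = 0
  · rw [hzero]
    exact zero_mem _
  obtain ⟨l, rfl⟩ : ∃ l' : Fin d, Fin.castAdd m l' = l :=
    ⟨⟨l, lt_of_le_of_lt (Fin.le_def.mp hl) j.isLt⟩, rfl⟩
  rw [← gramSchmidtOrthonormalBasis_apply hcard hzero]
  exact subset_span ⟨l, rfl⟩

section GramVol

variable {n : ℕ}

theorem gramVol_eq_prod_norm_gramSchmidt {k : ℕ} (w : Fin k → EuclideanSpace ℝ (Fin n)) :
    gramVol w = ∏ i, ‖gramSchmidt ℝ w i‖ := by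
  rw [gramVol, ← Matrix.gram, det_gram_eq_prod_norm_gramSchmidt_sq, prod_pow,
    Real.sqrt_sq (prod_nonneg fun i _ => norm_nonneg _)]

theorem norm_mul_pow_le_gramVol {d : ℕ} (w : Fin (d + 1) → EuclideanSpace ℝ (Fin n)) {ρ : ℝ}
    (hρ : 0 ≤ ρ) (h : ∀ i : Fin d, ρ ≤ ‖gramSchmidt ℝ w i.succ‖) :
    ‖w 0‖ * ρ ^ d ≤ gramVol w := by
  rw [gramVol_eq_prod_norm_gramSchmidt, Fin.prod_univ_succ, ← bot_eq_zero, gramSchmidt_bot]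
  gcongr
  simpa using prod_le_prod (s := univ) (fun _ _ => hρ) fun i _ => h i

theorem gramVol_snoc_le {d : ℕ} (v : Fin d → EuclideanSpace ℝ (Fin n)) (hv : ∀ j, ‖v j‖ ≤ 1)
    (x : EuclideanSpace ℝ (Fin n)) {q : EuclideanSpace ℝ (Fin n)}
    (hq : q ∈ span ℝ (Set.range v)) : gramVol (Fin.snoc v x) ≤ ‖x - q‖ := by
  rw [gramVol_eq_prod_norm_gramSchmidt, Fin.prod_univ_castSucc]
  have hprefix : ∏ j : Fin d, ‖gramSchmidt ℝ (Fin.snoc v x : Fin (d + 1) → _) j.castSucc‖ ≤ 1 :=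
    prod_le_one (fun _ _ => norm_nonneg _) fun j _ =>
      (norm_gramSchmidt_le_norm_sub _ j.castSucc (zero_mem _)).trans (by simpa using hv j)
  have hlast : ‖gramSchmidt ℝ (Fin.snoc v x : Fin (d + 1) → _) (Fin.last d)‖ ≤ ‖x - q‖ := by
    refine (norm_gramSchmidt_le_norm_sub _ _ (span_mono ?_ hq)).trans_eq (by simp)
    rintro _ ⟨j, rfl⟩
    exact ⟨j.castSucc, Fin.castSucc_lt_last j, by simp⟩
  calc _ ≤ 1 * ‖x - q‖ := mul_le_mul hprefix hlast (norm_nonneg _) zero_le_one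
    _ = ‖x - q‖ := one_mul _

theorem gramVol_snoc_le_norm_gramSchmidt {d k : ℕ} (v : Fin d → EuclideanSpace ℝ (Fin n))
    (hv : ∀ j, ‖v j‖ ≤ 1) (w : Fin k → EuclideanSpace ℝ (Fin n)) (i : Fin k)
    (hw : span ℝ (w '' Set.Iio i) ≤ span ℝ (Set.range v)) :
    gramVol (Fin.snoc v (w i)) ≤ ‖gramSchmidt ℝ w i‖ := by
  simpa using gramVol_snoc_le v hv (w i) (hw (sub_gramSchmidt_mem_span w i))

theorem gramVol_snoc_le_norm_gramSchmidt_update {α : Type*} [DecidableEq α] {d : ℕ}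
    (u : α → EuclideanSpace ℝ (Fin n)) (g : Fin (d + 1) → α) (i : Fin (d + 1)) (m : α)
    (v : Fin d → EuclideanSpace ℝ (Fin n)) (hv : ∀ j, ‖v j‖ ≤ 1)
    (hspan : span ℝ (Set.range (u ∘ g ∘ Fin.castSucc)) ≤ span ℝ (Set.range v)) :
    gramVol (Fin.snoc v (u m)) ≤ ‖gramSchmidt ℝ (u ∘ Function.update g i m) i‖ := by
  have hprefix : span ℝ ((u ∘ Function.update g i m) '' Set.Iio i) ≤ span ℝ (Set.range v) := by
    refine (span_mono ?_).trans hspan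
    rintro _ ⟨l, hl : l < i, rfl⟩
    obtain ⟨l, rfl⟩ := Fin.exists_castSucc_eq.mpr (hl.trans_le (Fin.le_last _)).ne
    exact ⟨l, by simp [Function.update_of_ne hl.ne]⟩
  simpa using gramVol_snoc_le_norm_gramSchmidt v hv _ i hprefix

theorem card_filter_gramVol_lt_le_sum {N d : ℕ} {ρ : ℝ} (hρ : 0 ≤ ρ)
    (u : Fin N → EuclideanSpace ℝ (Fin n)) (hu : ∀ i, ‖u i‖ = 1) :
    #{f : Fin (d + 1) → Fin N | gramVol (u ∘ f) < ρ ^ d} ≤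
      ∑ i : Fin d, #{f : Fin (d + 1) → Fin N | ‖gramSchmidt ℝ (u ∘ f) i.succ‖ < ρ} := by
  refine (card_le_card fun f hf => ?_).trans card_biUnion_le
  simp only [mem_filter, mem_univ, true_and, mem_biUnion] at hf ⊢
  by_contra! hfar
  exact hf.not_ge (by simpa [hu] using norm_mul_pow_le_gramVol (u ∘ f) hρ hfar)

end GramVol

theorem sum_card_filter_update_mem {ι α : Type*} [Fintype ι] [DecidableEq ι] [Fintype α]
    [DecidableEq α] (S : Finset (ι → α)) (i : ι) :
    ∑ g : ι → α, #{a | Function.update g i a ∈ S} = Fintype.card α * #S := by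
  let e : (ι → α) × α ≃ (ι → α) × α :=
    Function.Involutive.toPerm (fun p => (Function.update p.1 i p.2, p.1 i)) fun p => by simp
  calc ∑ g : ι → α, #{a | Function.update g i a ∈ S}
      = ∑ p : (ι → α) × α, if (e p).1 ∈ S then 1 else 0 := by
        simp only [card_filter, Fintype.sum_prod_type]
        rfl
    _ = ∑ p : (ι → α) × α, if p.1 ∈ S then 1 else 0 := e.sum_comp fun p => if p.1 ∈ S then 1 else 0
    _ = ∑ g : ι → α, ∑ _a : α, if g ∈ S then 1 else 0 := Fintype.sum_prod_type _
    _ = Fintype.card α * #S := by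
        simp only [sum_const, card_univ, smul_eq_mul, ← mul_sum, sum_boole, Nat.cast_id,
          filter_mem_eq_inter, univ_inter]

theorem exists_lt_mul_card_filter_update_mem {ι κ α : Type*} [Fintype ι] [DecidableEq ι]
    [Fintype κ] [Fintype α] [DecidableEq α] (S : κ → Finset (ι → α)) (i : κ → ι) (r s : ℕ)
    (h : Fintype.card κ * Fintype.card (ι → α) * r < s * (Fintype.card α * ∑ j, #(S j))) :
    ∃ j g, r < s * #{a | Function.update g (i j) a ∈ S j} := by
  have hsum : ∑ j : κ, ∑ _g : ι → α, r < ∑ j, ∑ g, s * #{a | Function.update g (i j) a ∈ S j} := by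
    simp only [← mul_sum, sum_card_filter_update_mem, sum_const, card_univ, smul_eq_mul]
    linarith
  obtain ⟨j, -, hj⟩ := exists_lt_of_sum_lt hsum
  obtain ⟨g, -, hg⟩ := exists_lt_of_sum_lt hj
  exact ⟨j, g, hg⟩

theorem card_lt_two_mul_card_filter_not {α : Type*} (s : Finset α) (p : α → Prop)
    [DecidablePred p] (h : ¬ (1 / 2 : ℝ) * #s ≤ #(s.filter p)) :
    #s < 2 * #(s.filter (¬ p ·)) := by
  have hsplit : (#(s.filter p) : ℝ) + #(s.filter (¬ p ·)) = #s := by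
    exact_mod_cast card_filter_add_card_filter_not p
  have : (#s : ℝ) < 2 * #(s.filter (¬ p ·)) := by linarith
  exact_mod_cast this

theorem two_zpow_neg_two_mul_succ_mul_le {d N c : ℕ} (h : N ≤ 2 * d * c) :
    (2 : ℝ) ^ (-(2 * ((d + 1 : ℕ) : ℤ))) * N ≤ c := by
  have hpow : 2 * d ≤ 2 ^ (2 * (d + 1)) := calc
    2 * d ≤ 2 * 2 ^ d := by have := d.lt_two_pow_self; omega
    _ ≤ 2 ^ (2 * (d + 1)) := by rw [← pow_succ']; exact Nat.pow_le_pow_right two_pos (by omega)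
  have hN : (N : ℝ) ≤ 2 ^ (2 * (d + 1)) * c := by exact_mod_cast h.trans (by gcongr)
  calc (2 : ℝ) ^ (-(2 * ((d + 1 : ℕ) : ℤ))) * N
      ≤ 2 ^ (-(2 * ((d + 1 : ℕ) : ℤ))) * (2 ^ (2 * (d + 1)) * c) := by gcongr
    _ = c := by
        rw [← mul_assoc, ← zpow_natCast, ← zpow_add₀ two_ne_zero]
        simp

theorem stmt_0_general {n k N : ℕ} (hk : 1 ≤ k) (hkn : k ≤ n) {ρ : ℝ} (hρ0 : 0 ≤ ρ)
    (u : Fin N → EuclideanSpace ℝ (Fin n)) (hu : ∀ i, ‖u i‖ = 1) :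
    ((1 : ℝ) / 2) * (N : ℝ) ^ k ≤
      ((Finset.univ.filter fun f : Fin k → Fin N =>
          ρ ^ (k - 1) ≤ gramVol (u ∘ f)).card : ℝ) ∨
    ∃ v : Fin (k - 1) → EuclideanSpace ℝ (Fin n), Orthonormal ℝ v ∧
      (2 : ℝ) ^ (-(2 * k : ℤ)) * (N : ℝ) ≤
        ((Finset.univ.filter fun i : Fin N =>
            gramVol (Fin.snoc v (u i)) ≤ ρ).card : ℝ) := by
  obtain ⟨d, rfl⟩ : ∃ d, k = d + 1 := ⟨k - 1, by omega⟩
  simp only [Nat.add_sub_cancel]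
  rcases N.eq_zero_or_pos with rfl | hN
  · left
    simp
  refine or_iff_not_imp_left.mpr fun hA => ?_
  set S : Fin d → Finset (Fin (d + 1) → Fin N) :=
    fun i => {f | ‖gramSchmidt ℝ (u ∘ f) i.succ‖ < ρ}
  have hbad : N ^ (d + 1) < 2 * ∑ i, #(S i) := by
    have := card_lt_two_mul_card_filter_not univ (fun f => ρ ^ d ≤ gramVol (u ∘ f))
      (by simpa [Fintype.card_fun] using hA)
    simp only [not_le, card_univ, Fintype.card_fun, Fintype.card_fin] at this
    exact this.trans_le (Nat.mul_le_mul_left 2 (card_filter_gramVol_lt_le_sum hρ0 u hu))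
  have hd : 0 < d := Nat.pos_of_ne_zero (by rintro rfl; simp at hbad)
  obtain ⟨i, g, hig⟩ := exists_lt_mul_card_filter_update_mem S Fin.succ N (2 * d) (by
    simp only [Fintype.card_fin, Fintype.card_fun]
    calc d * N ^ (d + 1) * N < d * (2 * ∑ i, #(S i)) * N := by gcongr
      _ = 2 * d * (N * ∑ i, #(S i)) := by ring)
  obtain ⟨v, hv, hspan⟩ := exists_orthonormal_span_le (by simp; omega) (u ∘ g ∘ Fin.castSucc)
  refine ⟨v, hv, (two_zpow_neg_two_mul_succ_mul_le hig.le).trans ?_⟩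
  refine mod_cast card_le_card fun m hm => ?_
  simp only [mem_filter, mem_univ, true_and, S] at hm ⊢
  exact (gramVol_snoc_le_norm_gramSchmidt_update u g i.succ m v (fun j => (hv.1 j).le) hspan).trans
    hm.le

theorem stmt_0 {n k N : ℕ} (hk : 1 ≤ k) (hkn : k ≤ n) {ρ : ℝ} (hρ0 : 0 ≤ ρ) (hρ1 : ρ ≤ 1)
    (u : Fin N → EuclideanSpace ℝ (Fin n)) (hu : ∀ i, ‖u i‖ = 1) :
    ((1 : ℝ) / 2) * (N : ℝ) ^ k ≤
      ((Finset.univ.filter fun f : Fin k → Fin N =>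
          ρ ^ (k - 1) ≤ gramVol (u ∘ f)).card : ℝ) ∨
    ∃ v : Fin (k - 1) → EuclideanSpace ℝ (Fin n), Orthonormal ℝ v ∧
      (2 : ℝ) ^ (-(2 * k : ℤ)) * (N : ℝ) ≤
        ((Finset.univ.filter fun i : Fin N =>
            gramVol (Fin.snoc v (u i)) ≤ ρ).card : ℝ) :=
  stmt_0_general hk hkn hρ0 u hu
end

section
/- Let U be a finite multiset of unit vectors in R^n, let 1 ≤ k ≤ n, and let 0 < ρ ≤ 1. Then (#U) ≤ C(n,k) [ ρ^{(1-k)/k} ( Σ_{u_1 ∈ U} ... Σ_{u_k ∈ U} |u_1 ∧ ... ∧ u_k| )^{1/k} + sup_{H ∈ Gr(k-1, R^n)} #{u ∈ U : |H ∧ u| ≤ ρ} ], where C(n,k) is a constant depending only on n and k. -/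
/-!
Adjoining `x` to a family `w` multiplies its volume by the distance from `x` to `span w`. If
`span w` lies in the span of an orthonormal `(k-1)`-family `v`, this distance is at least
`|span v ∧ x|`, which exceeds `ρ` for all but at most `M` of the `u i`. Summing over all tuples,
each additional vector therefore multiplies the total volume by at least `ρ (N - M)`, so
`∑ |u_1 ∧ … ∧ u_k| ≥ N (ρ (N - M))^(k-1)`. When `M < N / 2` this gives
`N / 2 ≤ ρ^((1-k)/k) (∑ |u_1 ∧ … ∧ u_k|)^(1/k)`; otherwise `N ≤ 2 M`. Hence `C = 2` works.
-/

open Finset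
open scoped Classical

open Matrix Module Submodule

section Gram

variable {E : Type*} [NormedAddCommGroup E] [InnerProductSpace ℝ E] {m : ℕ}

theorem Matrix.det_updateRow_last_single {R : Type*} [CommRing R]
    (A : Matrix (Fin (m + 1)) (Fin (m + 1)) R) :
    (A.updateRow (Fin.last m) (Pi.single (Fin.last m) 1)).det =
      (A.submatrix Fin.castSucc Fin.castSucc).det := by
  rw [← adjugate_apply, adjugate_fin_succ_eq_det_submatrix, Fin.succAbove_last,
    Even.neg_one_pow ⟨_, rfl⟩, one_mul]

theorem det_gram_snoc_add {w : Fin m → E} {p y : E} (hp : p ∈ span ℝ (Set.range w))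
    (hy : ∀ i, inner ℝ (w i) y = 0) :
    (gram ℝ (Fin.snoc w (p + y) : Fin (m + 1) → E)).det = ‖y‖ ^ 2 * (gram ℝ w).det := by
  have hpy : inner ℝ p y = 0 := by
    obtain ⟨c, rfl⟩ := mem_span_range_iff_exists_fun ℝ |>.1 hp
    simp [sum_inner, real_inner_smul_left, hy]
  have hdep : (gram ℝ (Fin.snoc w p : Fin (m + 1) → E)).det = 0 := by
    rw [← not_ne_iff, det_gram_ne_zero_iff_linearIndependent, linearIndependent_finSnoc]
    exact fun h => h.2 hp
  -- As `y ⊥ w` and `y ⊥ p`, replacing `p` by `p + y` only adds `‖y‖²` to the last diagonal entry.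
  have hrow : gram ℝ (Fin.snoc w (p + y) : Fin (m + 1) → E) =
      (gram ℝ (Fin.snoc w p : Fin (m + 1) → E)).updateRow (Fin.last m)
        (gram ℝ (Fin.snoc w p : Fin (m + 1) → E) (Fin.last m) +
          ‖y‖ ^ 2 • Pi.single (Fin.last m) 1) := by
    ext i j
    cases i using Fin.lastCases <;> cases j using Fin.lastCases <;>
      simp [inner_add_left, inner_add_right, hy, real_inner_comm _ y, norm_add_sq_real, hpy]
  rw [hrow, det_updateRow_add, updateRow_eq_self, det_updateRow_smul, det_updateRow_last_single,
    hdep, zero_add]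
  congr 2
  ext i j
  simp

end Gram

theorem Submodule.norm_sub_starProjection_anti {𝕜 F : Type*} [RCLike 𝕜] [NormedAddCommGroup F]
    [InnerProductSpace 𝕜 F] {W W' : Submodule 𝕜 F} [W.HasOrthogonalProjection]
    [W'.HasOrthogonalProjection] (h : W ≤ W') (x : F) :
    ‖x - W'.starProjection x‖ ≤ ‖x - W.starProjection x‖ := by
  rw [starProjection_minimal]
  exact ciInf_le ⟨0, Set.forall_mem_range.2 fun _ => norm_nonneg _⟩
    (⟨_, h (W.starProjection_apply_mem x)⟩ : W')

theorem Submodule.exists_le_finrank_eq {K V : Type*} [DivisionRing K] [AddCommGroup V]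
    [Module K V] [FiniteDimensional K V] (W : Submodule K V) {m : ℕ} (hWm : finrank K W ≤ m)
    (hm : m ≤ finrank K V) : ∃ W' : Submodule K V, W ≤ W' ∧ finrank K W' = m := by
  induction m, hWm using Nat.le_induction with
  | base => exact ⟨W, le_rfl, rfl⟩
  | succ m _ ih =>
    obtain ⟨W', hWW', hW'⟩ := ih (by omega)
    have hne : W' ≠ ⊤ := by
      rintro rfl
      rw [finrank_top] at hW'
      omega
    obtain ⟨x, -, hx⟩ := SetLike.exists_of_lt (lt_top_iff_ne_top.2 hne)
    exact ⟨W' ⊔ span K {x}, hWW'.trans le_sup_left, by rw [finrank_sup_span_singleton hx, hW']⟩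

theorem exists_orthonormal_le_span {F : Type*} [NormedAddCommGroup F] [InnerProductSpace ℝ F]
    [FiniteDimensional ℝ F] (W : Submodule ℝ F) {m : ℕ} (hWm : finrank ℝ W ≤ m)
    (hm : m ≤ finrank ℝ F) :
    ∃ v : Fin m → F, Orthonormal ℝ v ∧ W ≤ span ℝ (Set.range v) := by
  obtain ⟨W', hWW', hW'⟩ := W.exists_le_finrank_eq hWm hm
  let b := (stdOrthonormalBasis ℝ W').reindex (finCongr hW')
  refine ⟨W'.subtype ∘ b, b.orthonormal.comp_linearIsometry W'.subtypeₗᵢ, hWW'.trans ?_⟩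
  rw [Set.range_comp, ← map_span, ← b.coe_toBasis, b.toBasis.span_eq, Submodule.map_top,
    range_subtype]

section GramVol

variable {n m : ℕ}

theorem gramVol_eq_sqrt_det_gram (w : Fin m → EuclideanSpace ℝ (Fin n)) :
    gramVol w = √(gram ℝ w).det := rfl

theorem gramVol_nonneg (w : Fin m → EuclideanSpace ℝ (Fin n)) : 0 ≤ gramVol w :=
  Real.sqrt_nonneg _

theorem gramVol_fin_one (w : Fin 1 → EuclideanSpace ℝ (Fin n)) : gramVol w = ‖w 0‖ := by
  rw [gramVol_eq_sqrt_det_gram, det_fin_one, gram_apply, real_inner_self_eq_norm_sq,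
    Real.sqrt_sq (norm_nonneg _)]

theorem gramVol_of_orthonormal {v : Fin m → EuclideanSpace ℝ (Fin n)} (hv : Orthonormal ℝ v) :
    gramVol v = 1 := by
  rw [gramVol_eq_sqrt_det_gram, gram_eq_one_iff_orthonormal.2 hv, det_one, Real.sqrt_one]

theorem gramVol_snoc (w : Fin m → EuclideanSpace ℝ (Fin n)) (x : EuclideanSpace ℝ (Fin n)) :
    gramVol (Fin.snoc w x : Fin (m + 1) → _) =
      ‖x - (span ℝ (Set.range w)).starProjection x‖ * gramVol w := by
  set W := span ℝ (Set.range w)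
  have hdet := det_gram_snoc_add (W.starProjection_apply_mem x) fun i =>
    inner_right_of_mem_orthogonal (subset_span (Set.mem_range_self i))
      (W.sub_starProjection_mem_orthogonal x)
  rw [add_sub_cancel] at hdet
  rw [gramVol_eq_sqrt_det_gram, gramVol_eq_sqrt_det_gram, hdet,
    Real.sqrt_mul (sq_nonneg _), Real.sqrt_sq (norm_nonneg _)]

theorem gramVol_snoc_mul_le {k : ℕ} {v : Fin k → EuclideanSpace ℝ (Fin n)} (hv : Orthonormal ℝ v)
    {w : Fin m → EuclideanSpace ℝ (Fin n)} (hwv : span ℝ (Set.range w) ≤ span ℝ (Set.range v))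
    (x : EuclideanSpace ℝ (Fin n)) :
    gramVol (Fin.snoc v x : Fin (k + 1) → _) * gramVol w ≤
      gramVol (Fin.snoc w x : Fin (m + 1) → _) := by
  rw [gramVol_snoc, gramVol_snoc, gramVol_of_orthonormal hv, mul_one]
  exact mul_le_mul_of_nonneg_right (norm_sub_starProjection_anti hwv x) (gramVol_nonneg w)

end GramVol

theorem Fintype.sum_pi_fin_succ {α β : Type*} [Fintype α] [AddCommMonoid β] {j : ℕ}
    (g : (Fin (j + 1) → α) → β) : ∑ f, g f = ∑ f : Fin j → α, ∑ a, g (Fin.snoc f a) := by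
  rw [← (Fin.snocEquiv fun _ => α).sum_comp, Fintype.sum_prod_type, Finset.sum_comm]
  rfl

section Counting

variable {n N m : ℕ} {ρ M : ℝ} {u : Fin N → EuclideanSpace ℝ (Fin n)}

/-- `M` bounds, for every `m`-dimensional subspace `H`, the number of `u i` with `|H ∧ u i| ≤ ρ`,
i.e. at distance at most `ρ` from `H`. -/
def IsNearCountBound (m : ℕ) (ρ : ℝ) (u : Fin N → EuclideanSpace ℝ (Fin n)) (M : ℝ) : Prop :=
  ∀ v : Fin m → EuclideanSpace ℝ (Fin n), Orthonormal ℝ v →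
    ((univ.filter fun i => gramVol (Fin.snoc v (u i) : Fin (m + 1) → _) ≤ ρ).card : ℝ) ≤ M

theorem mul_gramVol_le_sum_gramVol_snoc (hmn : m ≤ n) (hρ : 0 ≤ ρ)
    (hM : IsNearCountBound m ρ u M) {j : ℕ} (hj : j ≤ m) (w : Fin j → EuclideanSpace ℝ (Fin n)) :
    ρ * (N - M) * gramVol w ≤ ∑ i, gramVol (Fin.snoc w (u i) : Fin (j + 1) → _) := by
  obtain ⟨v, hv, hwv⟩ := exists_orthonormal_le_span (span ℝ (Set.range w))
    ((finrank_range_le_card w).trans (by simpa using hj)) (by simpa using hmn)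
  set far := univ.filter fun i => ¬gramVol (Fin.snoc v (u i) : Fin (m + 1) → _) ≤ ρ
  have hfar : (N : ℝ) - M ≤ far.card := by
    have hsplit := card_filter_add_card_filter_not (s := univ)
      fun i => gramVol (Fin.snoc v (u i) : Fin (m + 1) → _) ≤ ρ
    rw [card_univ, Fintype.card_fin] at hsplit
    have hN : (N : ℝ) = _ := congrArg (Nat.cast (R := ℝ)) hsplit.symm
    push_cast at hN
    linarith [hM v hv]
  calc ρ * (N - M) * gramVol w ≤ far.card * (ρ * gramVol w) := by
        nlinarith [mul_nonneg hρ (gramVol_nonneg w)]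
    _ = ∑ i ∈ far, ρ * gramVol w := by rw [sum_const, nsmul_eq_mul]
    _ ≤ ∑ i ∈ far, gramVol (Fin.snoc w (u i) : Fin (j + 1) → _) := by
        refine sum_le_sum fun i hi => ?_
        have := not_le.1 (mem_filter.1 hi).2
        exact (mul_le_mul_of_nonneg_right this.le (gramVol_nonneg w)).trans
          (gramVol_snoc_mul_le hv hwv (u i))
    _ ≤ ∑ i, gramVol (Fin.snoc w (u i) : Fin (j + 1) → _) :=
        sum_le_sum_of_subset_of_nonneg (subset_univ _) fun _ _ _ => gramVol_nonneg _

theorem mul_pow_le_sum_gramVol (hu : ∀ i, ‖u i‖ = 1) (hmn : m ≤ n) (hρ : 0 ≤ ρ) (hMN : M ≤ N)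
    (hM : IsNearCountBound m ρ u M) {j : ℕ} (hj : j ≤ m) :
    N * (ρ * (N - M)) ^ j ≤ ∑ f : Fin (j + 1) → Fin N, gramVol (u ∘ f) := by
  induction j with
  | zero => simp [gramVol_fin_one, hu]
  | succ j ih =>
    rw [Fintype.sum_pi_fin_succ]
    calc (N : ℝ) * (ρ * (N - M)) ^ (j + 1)
        = ρ * (N - M) * (N * (ρ * (N - M)) ^ j) := by ring
      _ ≤ ρ * (N - M) * ∑ f : Fin (j + 1) → Fin N, gramVol (u ∘ f) :=
          mul_le_mul_of_nonneg_left (ih (by omega)) (mul_nonneg hρ (by linarith))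
      _ ≤ ∑ f : Fin (j + 1) → Fin N, ∑ i, gramVol (u ∘ Fin.snoc f i) := by
          rw [mul_sum]
          refine sum_le_sum fun f _ => ?_
          simpa only [Fin.comp_snoc] using mul_gramVol_le_sum_gramVol_snoc hmn hρ hM hj (u ∘ f)

end Counting

theorem le_rpow_mul_rpow_of_mul_pow_le {x ρ S : ℝ} {k : ℕ} (hk : 1 ≤ k) (hx : 0 ≤ x) (hρ : 0 < ρ)
    (h : x * (ρ * x) ^ (k - 1) ≤ S) : x ≤ ρ ^ ((1 - k : ℝ) / k) * S ^ ((1 : ℝ) / k) := by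
  obtain ⟨j, rfl⟩ : ∃ j, k = j + 1 := ⟨k - 1, by omega⟩
  rw [Nat.add_sub_cancel] at h
  have hS : 0 ≤ S := le_trans (by positivity) h
  have hρj : ρ ^ (1 - (j + 1 : ℕ) : ℝ) * ρ ^ j = 1 := by
    rw [← Real.rpow_natCast, ← Real.rpow_add hρ]
    simp
  calc x = (x ^ (j + 1)) ^ (((j + 1 : ℕ) : ℝ)⁻¹) :=
        (Real.pow_rpow_inv_natCast hx j.succ_ne_zero).symm
    _ = (ρ ^ (1 - (j + 1 : ℕ) : ℝ) * (x * (ρ * x) ^ j)) ^ (((j + 1 : ℕ) : ℝ)⁻¹) := by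
        congr 1
        linear_combination (-(x * x ^ j)) * hρj
    _ ≤ (ρ ^ (1 - (j + 1 : ℕ) : ℝ) * S) ^ (((j + 1 : ℕ) : ℝ)⁻¹) := by gcongr
    _ = ρ ^ ((1 - (j + 1 : ℕ) : ℝ) / (j + 1 : ℕ)) * S ^ ((1 : ℝ) / (j + 1 : ℕ)) := by
        rw [Real.mul_rpow (by positivity) hS, ← Real.rpow_mul hρ.le, div_eq_mul_inv, one_div]

/-- `M` stands for the supremum over `Gr(k-1, ℝⁿ)` of `#{u ∈ U : |H ∧ u| ≤ ρ}`: it is assumed to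
bound that count for every subspace `H`, given by an orthonormal basis `v`. -/
theorem stmt_3 (n k : ℕ) (hk : 1 ≤ k) (hkn : k ≤ n) :
    ∃ C : ℝ, 0 < C ∧ ∀ (N : ℕ) (ρ : ℝ), 0 < ρ → ρ ≤ 1 →
      ∀ u : Fin N → EuclideanSpace ℝ (Fin n), (∀ i, ‖u i‖ = 1) →
      ∀ M : ℝ,
        (∀ v : Fin (k - 1) → EuclideanSpace ℝ (Fin n), Orthonormal ℝ v →
          ((Finset.univ.filter fun i : Fin N =>
              gramVol (Fin.snoc v (u i)) ≤ ρ).card : ℝ) ≤ M) →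
        (N : ℝ) ≤ C * (ρ ^ (((1 : ℝ) - k) / k) *
            (∑ f : Fin k → Fin N, gramVol (u ∘ f)) ^ ((1 : ℝ) / k) + M) := by
  refine ⟨2, two_pos, fun N ρ hρ _ u hu M hM => ?_⟩
  have hkn' : k - 1 ≤ n := by omega
  obtain ⟨v, hv, -⟩ := exists_orthonormal_le_span (⊥ : Submodule ℝ (EuclideanSpace ℝ (Fin n)))
    (m := k - 1) (by simp) (by simpa using hkn')
  have hM0 : 0 ≤ M := (Nat.cast_nonneg _).trans (hM v hv)
  rcases le_or_gt ((N : ℝ) / 2) M with hMN | hMN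
  · have hS0 : 0 ≤ ∑ f : Fin k → Fin N, gramVol (u ∘ f) := sum_nonneg fun f _ => gramVol_nonneg _
    have : 0 ≤ ρ ^ ((1 - k : ℝ) / k) * (∑ f : Fin k → Fin N, gramVol (u ∘ f)) ^ ((1 : ℝ) / k) := by
      positivity
    linarith
  have hS := mul_pow_le_sum_gramVol hu hkn' hρ.le (by linarith) hM le_rfl
  rw [Nat.sub_add_cancel hk] at hS
  have hN2 := le_rpow_mul_rpow_of_mul_pow_le hk (x := N / 2) (by positivity) hρ <| by
    refine le_trans ?_ hS
    gcongr
    · linarith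
    · linarith
  linarith
end

section
/- Let 2 ≤ k ≤ n and 0 < ρ ≤ 1. Let {τ} be a covering of the unit sphere S^{n-1} by spherical caps of diameter ρ such that each point of S^{n-1} is contained in at most 10^n caps. Then for every (k-1)-dimensional linear subspace H of R^n, the number of caps τ that intersect the set {u ∈ S^{n-1} : |H ∧ u| ≤ ρ} is at most C(n) ρ^{2-k} for a constant C(n) depending only on n. -/
/-!
Let `H = span v` and let `L : ℝᵏ⁻¹ → H` be the isometry given by the orthonormal basis `v`.
By a Schur complement, `|H ∧ x|` is the distance from `x` to `H`, so a unit vector `x` with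
`|H ∧ x| ≤ ρ` lies within `2ρ` of the unit sphere of `H`. A maximal separated subset of that
`(k-2)`-sphere is a `ρ`-net `Q`; the balls of radius `ρ/4` around its points are disjoint and lie
in an annulus of volume `O(ρ)`, so `#Q = O(ρ^{2-k})`. Every cap meeting the slab has its centre
within `7ρ/2` of some `L q`, and a ball of radius `7ρ/2` contains the centres of at most
`10ⁿ · 15ⁿ` caps: a maximal `ρ/2`-separated set of such centres has at most `15ⁿ` points by
volume packing, and each of them is within `ρ/2` of at most `10ⁿ` centres by the overlap bound.
-/

open Finset
open scoped Classical

open Metric MeasureTheory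

section Orthonormal
variable {E : Type*} [NormedAddCommGroup E] [InnerProductSpace ℝ E] {ι : Type*} [Fintype ι]
  {v : ι → E}

noncomputable def Orthonormal.euclideanIsometry (hv : Orthonormal ℝ v) :
    EuclideanSpace ℝ ι →ₗᵢ[ℝ] E :=
  LinearMap.isometryOfInner
    (Fintype.linearCombination ℝ v ∘ₗ (WithLp.linearEquiv 2 ℝ (ι → ℝ)).toLinearMap)
    fun a b => by
      simp [Fintype.linearCombination_apply, hv.inner_sum, PiLp.inner_apply, mul_comm]

@[simp]
lemma Orthonormal.euclideanIsometry_apply (hv : Orthonormal ℝ v) (a : EuclideanSpace ℝ ι) :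
    hv.euclideanIsometry a = ∑ i, a i • v i := rfl

end Orthonormal

lemma det_gram_snoc {E : Type*} [NormedAddCommGroup E] [InnerProductSpace ℝ E] {m : ℕ}
    {v : Fin m → E} (hv : Orthonormal ℝ v) (x : E) :
    (Matrix.gram ℝ (Fin.snoc v x : Fin (m + 1) → E)).det =
      ‖x - ∑ j, inner ℝ (v j) x • v j‖ ^ 2 := by
  set a : Fin m → ℝ := fun j => inner ℝ (v j) x
  have hblocks : (Matrix.gram ℝ (Fin.snoc v x : Fin (m + 1) → E)).submatrix finSumFinEquiv
      finSumFinEquiv = Matrix.fromBlocks 1 (Matrix.of fun i (_ : Fin 1) => a i)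
        (Matrix.of fun (_ : Fin 1) j => a j) (Matrix.of fun _ _ => inner ℝ x x) := by
    rw [← Matrix.gram_eq_one_iff_orthonormal.2 hv]
    ext (i | i) (j | j) <;> simp [Matrix.gram_apply, a, Fin.snoc, real_inner_comm]
  rw [← Matrix.det_submatrix_equiv_self finSumFinEquiv, hblocks, Matrix.det_fromBlocks_one₁₁,
    Matrix.det_fin_one, ← real_inner_self_eq_norm_sq]
  simp only [Matrix.sub_apply, Matrix.mul_apply, Matrix.of_apply]
  have hxs : inner ℝ x (∑ j, a j • v j) = ∑ j, a j * a j := by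
    simp [inner_sum, real_inner_smul_right, a, real_inner_comm]
  rw [inner_sub_sub_self, real_inner_comm x (∑ j, a j • v j), hxs, hv.inner_sum a a]
  simp only [conj_trivial]
  ring

lemma gramVol_snoc_s4 {n m : ℕ} {v : Fin m → EuclideanSpace ℝ (Fin n)} (hv : Orthonormal ℝ v)
    (x : EuclideanSpace ℝ (Fin n)) :
    gramVol (Fin.snoc v x) = ‖x - ∑ j, inner ℝ (v j) x • v j‖ := by
  rw [gramVol, ← Matrix.gram, det_gram_snoc hv, Real.sqrt_sq (norm_nonneg _)]

lemma LinearIsometry.exists_norm_eq_one_norm_sub_le {E F : Type*} [NormedAddCommGroup E]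
    [NormedSpace ℝ E] [NormedAddCommGroup F] [NormedSpace ℝ F] [Nontrivial F] (L : F →ₗᵢ[ℝ] E)
    {x : E} (hx : ‖x‖ = 1) (a : F) : ∃ u, ‖u‖ = 1 ∧ ‖x - L u‖ ≤ 2 * ‖x - L a‖ := by
  rcases eq_or_ne a 0 with rfl | ha
  · obtain ⟨u, hu⟩ := exists_norm_eq F zero_le_one
    refine ⟨u, hu, ?_⟩
    calc ‖x - L u‖ ≤ ‖x‖ + ‖L u‖ := norm_sub_le _ _
      _ = 2 * ‖x - L 0‖ := by rw [L.norm_map, hu, map_zero, sub_zero, hx]; norm_num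
  · refine ⟨‖a‖⁻¹ • a, norm_smul_inv_norm ha, ?_⟩
    have hscale : ‖L a - L (‖a‖⁻¹ • a)‖ = |‖L a‖ - ‖x‖| := by
      have hpos : 0 < ‖a‖ := norm_pos_iff.2 ha
      have : a - ‖a‖⁻¹ • a = (1 - ‖a‖⁻¹) • a := by rw [sub_smul, one_smul]
      rw [← map_sub, L.norm_map, L.norm_map, hx, this, norm_smul, Real.norm_eq_abs,
        ← abs_of_pos hpos, ← abs_mul, abs_of_pos hpos]
      congr 1
      field_simp
    calc ‖x - L (‖a‖⁻¹ • a)‖ ≤ ‖x - L a‖ + ‖L a - L (‖a‖⁻¹ • a)‖ :=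
          norm_sub_le_norm_sub_add_norm_sub _ _ _
      _ ≤ ‖x - L a‖ + ‖x - L a‖ := by
          rw [hscale, norm_sub_rev x]; gcongr; exact abs_norm_sub_norm_le _ _
      _ = 2 * ‖x - L a‖ := by ring

lemma LinearIsometry.exists_mem_norm_sub_le_of_isNet {E F : Type*} [NormedAddCommGroup E]
    [NormedSpace ℝ E] [NormedAddCommGroup F] [NormedSpace ℝ F] [Nontrivial F] (L : F →ₗᵢ[ℝ] E)
    {Q : Finset F} {ρ : ℝ} (hQ : ∀ u : F, ‖u‖ = 1 → ∃ q ∈ Q, ‖u - q‖ ≤ ρ) {x y : E} (hx : ‖x‖ = 1)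
    (hxy : ‖x - y‖ ≤ ρ / 2) {a : F} (hxa : ‖x - L a‖ ≤ ρ) :
    ∃ q ∈ Q, ‖y - L q‖ ≤ 7 * ρ / 2 := by
  obtain ⟨u, hu, hxu⟩ := L.exists_norm_eq_one_norm_sub_le hx a
  obtain ⟨q, hq, huq⟩ := hQ u hu
  refine ⟨q, hq, ?_⟩
  calc ‖y - L q‖ ≤ ‖y - x‖ + ‖x - L u‖ + ‖L u - L q‖ := by
        simpa only [dist_eq_norm] using dist_triangle4 y x (L u) (L q)
    _ ≤ ρ / 2 + 2 * ρ + ρ := by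
        rw [norm_sub_rev, ← map_sub, L.norm_map]
        gcongr
        linarith
    _ = 7 * ρ / 2 := by ring

lemma Finset.exists_subset_pairwise_lt_dist_forall_exists_dist_le {α X : Type*}
    [PseudoMetricSpace X] (t : Finset α) (y : α → X) {δ : ℝ} (hδ : 0 ≤ δ) :
    ∃ P ⊆ t, (P : Set α).Pairwise (fun i j => δ < dist (y i) (y j)) ∧
      ∀ i ∈ t, ∃ p ∈ P, dist (y i) (y p) ≤ δ := by
  obtain ⟨P, hP, hmax⟩ := (t.powerset.filter fun P : Finset α =>
    (P : Set α).Pairwise fun i j => δ < dist (y i) (y j)).exists_max_image card ⟨∅, by simp⟩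
  rw [mem_filter, mem_powerset] at hP
  refine ⟨P, hP.1, hP.2, fun i hi => ?_⟩
  by_contra! hfar
  have hiP : i ∉ P := fun h => (hfar i h).not_ge (by simpa using hδ)
  have hins := hmax (insert i P) <| by
    rw [mem_filter, mem_powerset, coe_insert]
    exact ⟨insert_subset hi hP.1,
      hP.2.insert fun j hj _ => ⟨hfar j hj, by rw [dist_comm]; exact hfar j hj⟩⟩
  rw [card_insert_of_notMem hiP] at hins
  omega

section Packing
variable {E : Type*} [NormedAddCommGroup E] [NormedSpace ℝ E] [FiniteDimensional ℝ E]
  [MeasurableSpace E] [BorelSpace E] (μ : Measure E) [μ.IsAddHaarMeasure]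

lemma card_mul_pow_le_of_pairwise_le_dist {α : Type*} (t : Finset α) (y : α → E) {r : ℝ}
    (hr : 0 < r) (hsep : (t : Set α).Pairwise fun i j => 2 * r ≤ dist (y i) (y j))
    {S : Set E} (hS : ∀ i ∈ t, ball (y i) r ⊆ S) {V : ℝ} (hV : 0 ≤ V)
    (hμS : μ S ≤ ENNReal.ofReal V * μ (ball 0 1)) :
    (#t : ℝ) * r ^ Module.finrank ℝ E ≤ V := by
  have hdisj : (t : Set α).PairwiseDisjoint fun i => ball (y i) r :=
    fun i hi j hj hij => ball_disjoint_ball (by linarith [hsep hi hj hij])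
  have hballs : (#t : ENNReal) * (ENNReal.ofReal (r ^ Module.finrank ℝ E) * μ (ball 0 1)) ≤
      ENNReal.ofReal V * μ (ball 0 1) :=
    calc (#t : ENNReal) * (ENNReal.ofReal (r ^ Module.finrank ℝ E) * μ (ball 0 1))
        = μ (⋃ i ∈ t, ball (y i) r) := by
          rw [measure_biUnion_finset hdisj fun i _ => measurableSet_ball]
          simp [Measure.addHaar_ball_of_pos μ _ hr]
      _ ≤ μ S := measure_mono (Set.iUnion₂_subset hS)
      _ ≤ ENNReal.ofReal V * μ (ball 0 1) := hμS
  rw [← mul_assoc, ENNReal.mul_le_mul_iff_left (measure_ball_pos μ _ one_pos).ne'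
    measure_ball_lt_top.ne, ← ENNReal.ofReal_natCast, ← ENNReal.ofReal_mul (by positivity),
    ENNReal.ofReal_le_ofReal_iff hV] at hballs
  exact hballs

lemma Measure.addHaar_closedBall_diff_ball [Nontrivial E] (x : E) {r R : ℝ} (hr : 0 ≤ r)
    (hrR : r ≤ R) :
    μ (closedBall x R \ ball x r) =
      ENNReal.ofReal (R ^ Module.finrank ℝ E - r ^ Module.finrank ℝ E) * μ (ball 0 1) := by
  rw [measure_sdiff (ball_subset_closedBall.trans (closedBall_subset_closedBall hrR))
    measurableSet_ball.nullMeasurableSet measure_ball_lt_top.ne,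
    Measure.addHaar_closedBall μ _ (hr.trans hrR), Measure.addHaar_ball μ _ hr,
    ← ENNReal.sub_mul fun _ _ => measure_ball_lt_top.ne,
    ENNReal.ofReal_sub _ (pow_nonneg hr _)]

end Packing

lemma one_add_pow_sub_one_sub_pow_le (d : ℕ) {t : ℝ} (ht₀ : 0 ≤ t) (ht₁ : t ≤ 1) :
    (1 + t) ^ d - (1 - t) ^ d ≤ 2 ^ (d + 1) * d * t := by
  have hmax : max |1 + t| |1 - t| ≤ 2 := max_le (by rw [abs_le]; constructor <;> linarith)
    (by rw [abs_le]; constructor <;> linarith)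
  calc (1 + t) ^ d - (1 - t) ^ d ≤ |(1 + t) ^ d - (1 - t) ^ d| := le_abs_self _
    _ ≤ |(1 + t) - (1 - t)| * d * max |1 + t| |1 - t| ^ (d - 1) := abs_pow_sub_pow_le _ _ _
    _ ≤ (2 * t) * d * 2 ^ d := by
        rw [show (1 + t) - (1 - t) = 2 * t by ring, abs_of_nonneg (by linarith)]
        gcongr
        exact (pow_le_pow_left₀ (by positivity) hmax _).trans
          (pow_le_pow_right₀ one_le_two (Nat.sub_le d 1))
    _ = 2 ^ (d + 1) * d * t := by ring

section SphereNet
variable {E : Type*} [NormedAddCommGroup E] [NormedSpace ℝ E] [FiniteDimensional ℝ E]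
  [Nontrivial E]

lemma card_le_of_subset_sphere_of_pairwise_lt_dist {Q : Finset E} (hQ : ∀ q ∈ Q, ‖q‖ = 1)
    {ρ : ℝ} (hρ : 0 < ρ) (hρ4 : ρ ≤ 4) (hsep : (Q : Set E).Pairwise fun p q => ρ / 2 < dist p q) :
    (#Q : ℝ) ≤ 16 ^ Module.finrank ℝ E * ρ ^ (1 - (Module.finrank ℝ E : ℝ)) := by
  borelize E
  set d := Module.finrank ℝ E
  have hpack : (#Q : ℝ) * (ρ / 4) ^ d ≤ (1 + ρ / 4) ^ d - (1 - ρ / 4) ^ d := by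
    refine card_mul_pow_le_of_pairwise_le_dist Measure.addHaar Q id (by positivity)
      (S := closedBall 0 (1 + ρ / 4) \ ball 0 (1 - ρ / 4))
      (fun p hp q hq hpq => by linarith [show ρ / 2 < dist (id p) (id q) from hsep hp hq hpq])
      (fun q hq z hz => ?_) (sub_nonneg.2 (pow_le_pow_left₀ (by linarith) (by linarith) d))
      (Measure.addHaar_closedBall_diff_ball _ _ (by linarith) (by linarith)).le
    have hzq : ‖z - q‖ < ρ / 4 := by rw [← dist_eq_norm]; exact hz
    simp only [Set.mem_sdiff, mem_closedBall, mem_ball, dist_zero_right, not_lt]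
    constructor <;> linarith [hQ q hq, norm_le_norm_add_norm_sub' z q, norm_le_norm_sub_add q z,
      norm_sub_rev z q]
  have hd : (d : ℝ) ≤ 2 ^ d := by exact_mod_cast Nat.lt_two_pow_self.le
  rw [Real.rpow_sub hρ, Real.rpow_one, Real.rpow_natCast, mul_div_assoc',
    le_div_iff₀ (by positivity)]
  calc (#Q : ℝ) * ρ ^ d = 4 ^ d * ((#Q : ℝ) * (ρ / 4) ^ d) := by
        rw [div_pow]; field_simp
    _ ≤ 4 ^ d * (2 ^ (d + 1) * d * (ρ / 4)) := mul_le_mul_of_nonneg_left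
        (hpack.trans (one_add_pow_sub_one_sub_pow_le d (by positivity) (by linarith)))
        (by positivity)
    _ = 4 ^ d * 2 ^ d * d * (ρ / 2) := by ring
    _ ≤ 4 ^ d * 2 ^ d * 2 ^ d * ρ := by gcongr; linarith
    _ = 16 ^ d * ρ := by rw [show (16 : ℝ) = 4 * 2 * 2 by norm_num, mul_pow, mul_pow]

lemma exists_finset_sphere_net {ρ : ℝ} (hρ : 0 < ρ) (hρ4 : ρ ≤ 4) :
    ∃ Q : Finset E, (∀ u : E, ‖u‖ = 1 → ∃ q ∈ Q, ‖u - q‖ ≤ ρ) ∧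
      (#Q : ℝ) ≤ 16 ^ Module.finrank ℝ E * ρ ^ (1 - (Module.finrank ℝ E : ℝ)) := by
  obtain ⟨s, hs_sphere, hs, hcover⟩ :=
    finite_cover_balls_of_compact (isCompact_sphere (0 : E) 1) (half_pos hρ)
  obtain ⟨Q, hQs, hsep, hnet⟩ :=
    hs.toFinset.exists_subset_pairwise_lt_dist_forall_exists_dist_le id (half_pos hρ).le
  refine ⟨Q, fun u hu => ?_, card_le_of_subset_sphere_of_pairwise_lt_dist
    (fun q hq => mem_sphere_zero_iff_norm.1 (hs_sphere (hs.mem_toFinset.1 (hQs hq)))) hρ hρ4 hsep⟩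
  obtain ⟨p, hp, hup⟩ := Set.mem_iUnion₂.1 (hcover (mem_sphere_zero_iff_norm.2 hu))
  obtain ⟨q, hq, hpq⟩ := hnet p (hs.mem_toFinset.2 hp)
  refine ⟨q, hq, ?_⟩
  rw [← dist_eq_norm]
  linarith [dist_triangle u p q, mem_ball.1 hup, show dist p q ≤ ρ / 2 from hpq]

end SphereNet

lemma card_filter_norm_sub_le_le_mul_pow {E : Type*} [NormedAddCommGroup E] [NormedSpace ℝ E]
    [FiniteDimensional ℝ E] {ι : Type*} [Fintype ι] (c : ι → E) {δ : ℝ} (hδ : 0 < δ) {N : ℕ}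
    (hN : ∀ i, #{j | ‖c i - c j‖ ≤ δ} ≤ N) (z : E) {R : ℝ} (hR : 0 ≤ R) {K : ℕ}
    (hK : 2 * R + δ ≤ K * δ) :
    #{i | ‖c i - z‖ ≤ R} ≤ N * K ^ Module.finrank ℝ E := by
  borelize E
  set d := Module.finrank ℝ E
  set T : Finset ι := {i | ‖c i - z‖ ≤ R}
  obtain ⟨P, hPT, hsep, hnet⟩ := T.exists_subset_pairwise_lt_dist_forall_exists_dist_le c hδ.le
  have hTP : (#T : ℝ) ≤ #P * N := by
    have hcover : T ⊆ P.biUnion fun p => {j | ‖c p - c j‖ ≤ δ} := fun i hi => by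
      obtain ⟨p, hp, hip⟩ := hnet i hi
      exact mem_biUnion.2 ⟨p, hp, by simpa [dist_eq_norm, norm_sub_rev] using hip⟩
    exact_mod_cast (card_le_card hcover).trans (card_biUnion_le_card_mul _ _ _ fun p _ => hN p)
  have hP : (#P : ℝ) * (δ / 2) ^ d ≤ (R + δ / 2) ^ d := by
    refine card_mul_pow_le_of_pairwise_le_dist Measure.addHaar P c (half_pos hδ)
      (fun p hp q hq hpq => by linarith [hsep hp hq hpq]) (S := ball z (R + δ / 2))
      (fun p hp y hy => ?_) (by positivity)
      (Measure.addHaar_ball_of_pos _ _ (by positivity)).le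
    have hpz : ‖c p - z‖ ≤ R := (mem_filter.1 (hPT hp)).2
    rw [mem_ball, dist_eq_norm] at hy ⊢
    linarith [norm_sub_le_norm_sub_add_norm_sub y (c p) z]
  suffices (#T : ℝ) * δ ^ d ≤ N * K ^ d * δ ^ d by
    exact_mod_cast le_of_mul_le_mul_right this (by positivity)
  calc (#T : ℝ) * δ ^ d ≤ #P * N * δ ^ d := by gcongr
    _ = N * (2 ^ d * (#P * (δ / 2) ^ d)) := by rw [div_pow]; field_simp
    _ ≤ N * (2 ^ d * (R + δ / 2) ^ d) := by gcongr
    _ = N * (2 * R + δ) ^ d := by rw [← mul_pow]; ring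
    _ ≤ N * K ^ d * δ ^ d := by rw [mul_assoc, ← mul_pow]; gcongr

/-- If `{τ}` is a covering of `S^{n-1}` by spherical caps of diameter `ρ` with overlap at
most `10^n` (caps are indexed by `ι`, the cap with center `c i` being
`{u : ‖u‖ = 1, ‖u - c i‖ ≤ ρ/2}`), and `H` is a `(k-1)`-dimensional subspace (given by an
orthonormal basis `v`), then at most `C(n) ρ^{2-k}` caps meet `{u ∈ S^{n-1} : |H ∧ u| ≤ ρ}`. -/
theorem stmt_4 (n : ℕ) :
    ∃ C : ℝ, 0 < C ∧
      ∀ (k : ℕ), 2 ≤ k → k ≤ n → ∀ ρ : ℝ, 0 < ρ → ρ ≤ 1 →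
      ∀ (ι : Type) [Fintype ι] (c : ι → EuclideanSpace ℝ (Fin n)),
        (∀ i, ‖c i‖ = 1) →
        (∀ x : EuclideanSpace ℝ (Fin n), ‖x‖ = 1 → ∃ i, ‖x - c i‖ ≤ ρ / 2) →
        (∀ x : EuclideanSpace ℝ (Fin n), ‖x‖ = 1 →
          ((Finset.univ.filter fun i : ι => ‖x - c i‖ ≤ ρ / 2).card : ℝ) ≤ 10 ^ n) →
        ∀ v : Fin (k - 1) → EuclideanSpace ℝ (Fin n), Orthonormal ℝ v →
          ((Finset.univ.filter fun i : ι =>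
              ∃ x : EuclideanSpace ℝ (Fin n), ‖x‖ = 1 ∧ ‖x - c i‖ ≤ ρ / 2 ∧
                gramVol (Fin.snoc v x) ≤ ρ).card : ℝ) ≤ C * ρ ^ ((2 : ℝ) - k) := by
  refine ⟨2400 ^ n, by positivity, ?_⟩
  intro k hk2 hkn ρ hρ hρ1 ι _ c hc _ hoverlap v hv
  have : NeZero (k - 1) := ⟨by omega⟩
  obtain ⟨Q, hQnet, hQcard⟩ :=
    exists_finset_sphere_net (E := EuclideanSpace ℝ (Fin (k - 1))) hρ (by linarith)
  have hnear : (univ.filter fun i : ι => ∃ x : EuclideanSpace ℝ (Fin n), ‖x‖ = 1 ∧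
      ‖x - c i‖ ≤ ρ / 2 ∧ gramVol (Fin.snoc v x) ≤ ρ) ⊆
        Q.biUnion fun q => {i | ‖c i - hv.euclideanIsometry q‖ ≤ 7 * ρ / 2} := fun i hi => by
    obtain ⟨x, hx, hxc, hgram⟩ := (mem_filter.1 hi).2
    obtain ⟨q, hq, hcq⟩ := hv.euclideanIsometry.exists_mem_norm_sub_le_of_isNet hQnet hx hxc
      (a := WithLp.toLp 2 fun j => inner ℝ (v j) x) (by simpa [gramVol_snoc_s4 hv] using hgram)
    exact mem_biUnion.2 ⟨q, hq, mem_filter.2 ⟨mem_univ _, hcq⟩⟩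
  have hcaps : ∀ q ∈ Q, #{i | ‖c i - hv.euclideanIsometry q‖ ≤ 7 * ρ / 2} ≤ 150 ^ n := fun q _ =>
    (card_filter_norm_sub_le_le_mul_pow c (half_pos hρ) (N := 10 ^ n) (K := 15)
      (fun i => by exact_mod_cast hoverlap (c i) (hc i)) _ (by positivity)
      (by push_cast; linarith)).trans_eq (by rw [finrank_euclideanSpace_fin, ← mul_pow]; norm_num)
  rw [finrank_euclideanSpace_fin, Nat.cast_sub (by omega), Nat.cast_one,
    show 1 - ((k : ℝ) - 1) = 2 - k by ring] at hQcard
  calc _ ≤ (#Q : ℝ) * 150 ^ n := by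
        exact_mod_cast (card_le_card hnear).trans (card_biUnion_le_card_mul _ _ _ hcaps)
    _ ≤ 16 ^ n * ρ ^ ((2 : ℝ) - k) * 150 ^ n := by
        gcongr
        exact hQcard.trans (by gcongr; exacts [by norm_num, by omega])
    _ = 2400 ^ n * ρ ^ ((2 : ℝ) - k) := by
        rw [show (2400 : ℝ) = 16 * 150 by norm_num, mul_pow]; ring
end
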